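/- arXiv:1910.08778 — 6 statements merged into one kernel-verified Lean document; each statement's English description precedes it below -/
import Mathlib

section
/- The intersection number of any finite simple graph on n vertices is at most ⌊n²/4⌋. -/
/-- `𝒞` is an edge clique cover of `G`: a family of cliques such that every
edge of `G` is contained in at least one clique of the family. -/
def IsECC {V : Type*} (G : SimpleGraph V) (𝒞 : Finset (Finset V)) : Prop :=
  (∀ C ∈ 𝒞, G.IsClique (C : Set V)) ∧
  ∀ u v : V, G.Adj u v → ∃ C ∈ 𝒞, u ∈ C ∧ v ∈ C

/-- The intersection number of `G`: the minimum number of cliques in an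
edge clique cover of `G`. -/
noncomputable def interNum {V : Type*} (G : SimpleGraph V) : ℕ :=
  sInf {n | ∃ 𝒞 : Finset (Finset V), IsECC G 𝒞 ∧ 𝒞.card = n}

/-!
Pick an edge `uv`, cover the edges of `G - u - v` inductively with `⌊(n-2)²/4⌋` cliques, and
add the clique `{u, v}` together with, for every other vertex `w`, the clique formed by `w` and
its neighbours among `u, v`. This adds `n - 1` cliques, and `⌊(n-2)²/4⌋ + n - 1 = ⌊n²/4⌋`.
-/

open Finset

lemma Nat.add_two_sq_div_four (n : ℕ) : (n + 2) ^ 2 / 4 = n ^ 2 / 4 + n + 1 := by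
  rw [show (n + 2) ^ 2 = n ^ 2 + 4 * (n + 1) by ring, Nat.add_mul_div_left _ _ four_pos]
  ring

section

variable {V : Type*} {G : SimpleGraph V}

lemma interNum_le_card {𝒞 : Finset (Finset V)} (h : IsECC G 𝒞) : interNum G ≤ #𝒞 :=
  Nat.sInf_le ⟨𝒞, h, rfl⟩

def IsECCOn (G : SimpleGraph V) (𝒞 : Finset (Finset V)) (s : Finset V) : Prop :=
  (∀ C ∈ 𝒞, G.IsClique (C : Set V)) ∧ ∀ u ∈ s, ∀ v ∈ s, G.Adj u v → ∃ C ∈ 𝒞, u ∈ C ∧ v ∈ C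

lemma IsECCOn.isECC [Fintype V] {𝒞 : Finset (Finset V)} (h : IsECCOn G 𝒞 univ) : IsECC G 𝒞 :=
  ⟨h.1, fun u v huv ↦ h.2 u (mem_univ u) v (mem_univ v) huv⟩

lemma isECCOn_empty {s : Finset V} (hs : ∀ u ∈ s, ∀ v ∈ s, ¬G.Adj u v) : IsECCOn G ∅ s :=
  ⟨by simp, fun u hu v hv huv ↦ absurd huv (hs u hu v hv)⟩

variable [DecidableEq V] [DecidableRel G.Adj]

lemma isClique_insert_filter_adj {K : Finset V} (hK : G.IsClique (K : Set V)) (w : V) :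
    G.IsClique ((insert w (K.filter (G.Adj w)) : Finset V) : Set V) := by
  rw [coe_insert, SimpleGraph.isClique_insert]
  exact ⟨hK.subset (coe_subset.2 (filter_subset _ _)), fun b hb _ ↦ (mem_filter.1 hb).2⟩

variable (G) in
def extendCover (𝒞 : Finset (Finset V)) (s K : Finset V) : Finset (Finset V) :=
  insert K (𝒞 ∪ s.image fun w ↦ insert w (K.filter (G.Adj w)))

lemma card_extendCover_le (𝒞 : Finset (Finset V)) (s K : Finset V) :
    #(extendCover G 𝒞 s K) ≤ #𝒞 + #s + 1 :=
  calc #(extendCover G 𝒞 s K)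
      ≤ #(𝒞 ∪ s.image fun w ↦ insert w (K.filter (G.Adj w))) + 1 := card_insert_le _ _
    _ ≤ #𝒞 + #(s.image fun w ↦ insert w (K.filter (G.Adj w))) + 1 := by
        gcongr; exact card_union_le _ _
    _ ≤ #𝒞 + #s + 1 := by gcongr; exact card_image_le

lemma IsECCOn.extendCover {𝒞 : Finset (Finset V)} {s K : Finset V} (h : IsECCOn G 𝒞 s)
    (hK : G.IsClique (K : Set V)) : IsECCOn G (extendCover G 𝒞 s K) (s ∪ K) := by
  have mem_nbhd {w} (hw : w ∈ s) :
      insert w (K.filter (G.Adj w)) ∈ _root_.extendCover G 𝒞 s K :=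
    mem_insert_of_mem (mem_union_right _ (mem_image_of_mem _ hw))
  refine ⟨fun C hC ↦ ?_, fun a ha b hb hab ↦ ?_⟩
  · simp only [_root_.extendCover, mem_insert, mem_union, mem_image] at hC
    obtain rfl | hC | ⟨w, -, rfl⟩ := hC
    exacts [hK, h.1 C hC, isClique_insert_filter_adj hK w]
  rw [mem_union] at ha hb
  obtain ha | ha := ha <;> obtain hb | hb := hb
  · obtain ⟨C, hC, hCa, hCb⟩ := h.2 a ha b hb hab
    exact ⟨C, mem_insert_of_mem (mem_union_left _ hC), hCa, hCb⟩
  · exact ⟨_, mem_nbhd ha, mem_insert_self _ _, mem_insert_of_mem (mem_filter.2 ⟨hb, hab⟩)⟩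
  · exact ⟨_, mem_nbhd hb, mem_insert_of_mem (mem_filter.2 ⟨ha, hab.symm⟩), mem_insert_self _ _⟩
  · exact ⟨K, mem_insert_self _ _, ha, hb⟩

variable (G) in
theorem exists_isECCOn_card_le (s : Finset V) :
    ∃ 𝒞, IsECCOn G 𝒞 s ∧ #𝒞 ≤ #s ^ 2 / 4 := by
  induction s using Finset.strongInduction with
  | H s ih =>
  by_cases hs : ∃ u ∈ s, ∃ v ∈ s, G.Adj u v
  swap
  · push Not at hs
    exact ⟨∅, isECCOn_empty hs, by simp⟩
  obtain ⟨u, hu, v, hv, huv⟩ := hs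
  have huvs : {u, v} ⊆ s := insert_subset hu (singleton_subset_iff.2 hv)
  obtain ⟨𝒞, h𝒞, hcard⟩ := ih (s \ {u, v}) (sdiff_ssubset huvs (insert_nonempty _ _))
  have hedge : G.IsClique (({u, v} : Finset V) : Set V) := by
    rw [coe_pair]; exact SimpleGraph.isClique_pair.2 fun _ ↦ huv
  have hs : #s = #(s \ {u, v}) + 2 := by
    rw [← card_sdiff_add_card_eq_card huvs, card_pair huv.ne]
  refine ⟨extendCover G 𝒞 (s \ {u, v}) {u, v}, ?_, ?_⟩
  · simpa only [sdiff_union_of_subset huvs] using h𝒞.extendCover hedge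
  · rw [hs, Nat.add_two_sq_div_four]
    have := card_extendCover_le (G := G) 𝒞 (s \ {u, v}) {u, v}
    omega

end

/-- Erdős–Goodman–Pósa: the intersection number of a graph on `n` vertices is
at most `⌊n²/4⌋`. -/
theorem interNum_le_sq_div_four {V : Type*} [Fintype V] [DecidableEq V] (G : SimpleGraph V) :
    interNum G ≤ Fintype.card V ^ 2 / 4 := by
  classical
  obtain ⟨𝒞, h𝒞, hcard⟩ := exists_isECCOn_card_le G (univ : Finset V)
  exact (interNum_le_card h𝒞.isECC).trans (by simpa using hcard)
end

section
/- Let G be the graph on vertices {1,2,3,4,5,6} whose edges are the 6-cycle 1-2-3-4-5-6-1 together with the chord {2,5}. Then G is triangle-free and its intersection number is 7; in particular, the minimum number of cliques in an edge clique cover of G exceeds the number of vertices of G. -/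
/-- The 6-cycle 1-2-3-4-5-6-1 with chord {2,5}, on vertices `Fin 6`
(vertex `i` standing for `i+1`). -/
def sixCycleChord : SimpleGraph (Fin 6) :=
  SimpleGraph.fromRel (fun a b =>
    (a, b) ∈ [((0 : Fin 6), (1 : Fin 6)), (1, 2), (2, 3), (3, 4), (4, 5), (5, 0), (1, 4)])

open Finset SimpleGraph

namespace Sym2

variable {α : Type*} [DecidableEq α]

theorem toFinset_injective : Function.Injective (toFinset : Sym2 α → Finset α) := fun z w h =>
  Sym2.ext fun x => by rw [← mem_toFinset, h, mem_toFinset]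

end Sym2

namespace SimpleGraph

variable {V : Type*} {G : SimpleGraph V}

theorem IsClique.card_lt_of_cliqueFree {n : ℕ} {s : Finset V} (hG : G.CliqueFree n)
    (hs : G.IsClique (s : Set V)) : #s < n := by
  by_contra! hn
  obtain ⟨t, hts, rfl⟩ := s.exists_subset_card_eq hn
  exact hG t ⟨hs.subset (coe_subset.mpr hts), rfl⟩

theorem IsClique.eq_toFinset_of_cliqueFree_three [DecidableEq V] {C : Finset V} {e : Sym2 V}
    (hG : G.CliqueFree 3) (hC : G.IsClique (C : Set V)) (he : e ∈ G.edgeSet)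
    (heC : ∀ x ∈ e, x ∈ C) : C = e.toFinset := by
  refine (eq_of_subset_of_card_le (fun x hx => heC x (Sym2.mem_toFinset.mp hx)) ?_).symm
  rw [Sym2.card_toFinset_of_not_isDiag e (G.not_isDiag_of_mem_edgeSet he)]
  exact Nat.le_of_lt_succ (hC.card_lt_of_cliqueFree hG)

end SimpleGraph

section EdgeCliqueCover

variable {V : Type*} [DecidableEq V] {G : SimpleGraph V}

theorem IsECC.toFinset_mem {𝒞 : Finset (Finset V)} (hG : G.CliqueFree 3) (h𝒞 : IsECC G 𝒞)
    {e : Sym2 V} (he : e ∈ G.edgeSet) : e.toFinset ∈ 𝒞 := by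
  induction e with
  | _ u v =>
    obtain ⟨C, hC𝒞, hu, hv⟩ := h𝒞.2 u v he
    have heC : ∀ x ∈ s(u, v), x ∈ C := by
      rintro x hx
      rcases Sym2.mem_iff.mp hx with rfl | rfl <;> assumption
    rwa [← (h𝒞.1 C hC𝒞).eq_toFinset_of_cliqueFree_three hG he heC]

variable [Fintype G.edgeSet]

theorem IsECC.card_edgeFinset_le {𝒞 : Finset (Finset V)} (hG : G.CliqueFree 3)
    (h𝒞 : IsECC G 𝒞) : #G.edgeFinset ≤ #𝒞 := by
  rw [← card_image_of_injective _ Sym2.toFinset_injective]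
  refine card_le_card fun C hC => ?_
  obtain ⟨e, he, rfl⟩ := mem_image.mp hC
  exact h𝒞.toFinset_mem hG (mem_edgeFinset.mp he)

theorem isECC_image_toFinset_edgeFinset : IsECC G (G.edgeFinset.image Sym2.toFinset) := by
  refine ⟨fun C hC => ?_, fun u v huv => ⟨s(u, v).toFinset, ?_, ?_⟩⟩
  · obtain ⟨e, he, rfl⟩ := mem_image.mp hC
    induction e with
    | _ u v =>
      rw [Sym2.toFinset_mk_eq, coe_pair, isClique_pair]
      exact fun _ => mem_edgeFinset.mp he
  · exact mem_image_of_mem _ (mem_edgeFinset.mpr huv)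
  · simp [Sym2.toFinset_mk_eq]

theorem interNum_le_card_edgeFinset : interNum G ≤ #G.edgeFinset :=
  Nat.sInf_le ⟨_, isECC_image_toFinset_edgeFinset,
    card_image_of_injective _ Sym2.toFinset_injective⟩

theorem SimpleGraph.CliqueFree.interNum_eq_card_edgeFinset (hG : G.CliqueFree 3) :
    interNum G = #G.edgeFinset := by
  refine interNum_le_card_edgeFinset.antisymm <|
    le_csInf ⟨_, _, isECC_image_toFinset_edgeFinset, rfl⟩ ?_
  rintro n ⟨𝒞, h𝒞, rfl⟩
  exact h𝒞.card_edgeFinset_le hG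

end EdgeCliqueCover

instance : DecidableRel sixCycleChord.Adj := fun _ _ =>
  decidable_of_iff _ (fromRel_adj _ _ _).symm

theorem sixCycleChord_cliqueFree_three : sixCycleChord.CliqueFree 3 := by
  unfold CliqueFree; decide

theorem card_edgeFinset_sixCycleChord : #sixCycleChord.edgeFinset = 7 := by decide

/-- The 6-cycle with a long chord is triangle-free, has intersection number 7,
and in particular its intersection number exceeds its number of vertices. -/
theorem sixCycleChord_interNum :
    sixCycleChord.CliqueFree 3 ∧ interNum sixCycleChord = 7 ∧
      Fintype.card (Fin 6) < interNum sixCycleChord := by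
  have h7 : interNum sixCycleChord = 7 := by
    rw [sixCycleChord_cliqueFree_three.interNum_eq_card_edgeFinset, card_edgeFinset_sixCycleChord]
  exact ⟨sixCycleChord_cliqueFree_three, h7, by rw [h7, Fintype.card_fin]; norm_num⟩
end

section
/- In a MeDIL causal model, for measurement vertices M_i, M_j, M_k: if M_i and M_j are d-connected given the empty set, then M_i and M_j are d-connected given {M_k}. -/
/-- Skeleton adjacency of a directed graph given by edge relation `E`. -/
def SkelAdj {V : Type*} (E : V → V → Prop) (a b : V) : Prop := E a b ∨ E b a

/-- A path (in the skeleton) of the directed graph `E` is blocked by the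
conditioning set `Z` if it contains an internal vertex `v` (with neighbors
`a`, `b` on the path) which is either a collider (both path edges point into
`v`) none of whose descendants lies in `Z`, or a non-collider lying in `Z`. -/
def Blocked {V : Type*} (E : V → V → Prop) (Z : Set V) (p : List V) : Prop :=
  ∃ a v b : V, List.IsInfix [a, v, b] p ∧
    ((E a v ∧ E b v ∧ ∀ d, Relation.ReflTransGen E v d → d ∉ Z) ∨
     (¬(E a v ∧ E b v) ∧ v ∈ Z))

/-- `x` and `y` are d-connected given `Z` in the directed graph `E` if there is
an unblocked (repetition-free) skeleton path from `x` to `y`. -/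
def DConn {V : Type*} (E : V → V → Prop) (Z : Set V) (x y : V) : Prop :=
  ∃ p : List V, p.Chain' (SkelAdj E) ∧ p.Nodup ∧
    p.head? = some x ∧ p.getLast? = some y ∧ ¬ Blocked E Z p

/-- A measurement dependence inducing latent (MeDIL) causal model: a DAG whose
vertices are partitioned into latents `L` (out-degree ≥ 1) and measurements `M`
(out-degree 0, in-degree ≥ 1). -/
structure MCM (V : Type*) where
  E : V → V → Prop
  L : Set V
  M : Set V
  disjoint : Disjoint L M
  union : L ∪ M = Set.univ
  acyclic : ∀ v : V, ¬ Relation.TransGen E v v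
  meas_sink : ∀ m ∈ M, ∀ v, ¬ E m v
  meas_indeg : ∀ m ∈ M, ∃ v, E v m
  lat_outdeg : ∀ l ∈ L, ∃ v, E l v

section SinkConditioning

variable {V : Type*} {E : V → V → Prop}

theorem collider_of_sink {a v b : V} (hp : [a, v, b].IsChain (SkelAdj E)) (hv : ∀ w, ¬ E v w) :
    E a v ∧ E b v := by
  simp only [List.isChain_cons_cons, List.isChain_singleton, and_true] at hp
  obtain ⟨hav, hvb⟩ := hp
  exact ⟨hav.resolve_right (hv a), hvb.resolve_left (hv b)⟩

/-- Conditioning on sinks can only unblock colliders: an internal sink of a skeleton path is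
itself a collider, never a blocking non-collider. -/
theorem Blocked.of_sinks {Z : Set V} {p : List V} (hZ : ∀ z ∈ Z, ∀ w, ¬ E z w)
    (hp : p.IsChain (SkelAdj E)) (hb : Blocked E Z p) : Blocked E ∅ p := by
  obtain ⟨a, v, b, hinf, hcollider | ⟨hnc, hvZ⟩⟩ := hb
  · exact ⟨a, v, b, hinf, .inl ⟨hcollider.1, hcollider.2.1, fun d _ => Set.notMem_empty d⟩⟩
  · exact absurd (collider_of_sink (hp.infix hinf) (hZ v hvZ)) hnc

theorem DConn.of_empty_of_sinks {Z : Set V} {x y : V} (hZ : ∀ z ∈ Z, ∀ w, ¬ E z w)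
    (h : DConn E ∅ x y) : DConn E Z x y := by
  obtain ⟨p, hp, hnd, hx, hy, hnb⟩ := h
  exact ⟨p, hp, hnd, hx, hy, fun hb => hnb (hb.of_sinks hZ hp)⟩

end SinkConditioning

theorem dconn_empty_imp_dconn_singleton_general {V : Type*} (G : MCM V) (Mi Mj Mk : V)
    (hk : Mk ∈ G.M)
    (h : DConn G.E ∅ Mi Mj) :
    DConn G.E {Mk} Mi Mj :=
  h.of_empty_of_sinks fun _ hz => hz ▸ G.meas_sink Mk hk

/-- In a MeDIL causal model, if measurement vertices `Mi` and `Mj` are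
d-connected given the empty set, then they are d-connected given `{Mk}` for any
measurement vertex `Mk`. -/
theorem dconn_empty_imp_dconn_singleton {V : Type*} (G : MCM V) (Mi Mj Mk : V)
    (hi : Mi ∈ G.M) (hj : Mj ∈ G.M) (hk : Mk ∈ G.M)
    (hij : Mi ≠ Mj) (hik : Mi ≠ Mk) (hjk : Mj ≠ Mk)
    (h : DConn G.E ∅ Mi Mj) :
    DConn G.E {Mk} Mi Mj :=
  dconn_empty_imp_dconn_singleton_general G Mi Mj Mk hk h
end

section
/- In a MeDIL causal model, for measurement vertices M_i, M_j, M_k: if M_i ⊥ M_j (d-separated given ∅) but M_i is d-connected to M_k given ∅ and M_j is d-connected to M_k given ∅, then M_i and M_j are d-connected given {M_k}. -/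
/-!
Take collider-free paths `p` from `x` to the sink `k` and `q` from `y` to `k`, let `w` be the
first vertex of `p` on `q`, and splice `p` up to `w` with `q` reversed from `w` back to `y`.
Both pieces are collider-free, so the only possible collider is `w` itself; then the rest of `p`
leaves `w` forwards and, having no collider, is a directed path `w → ⋯ → k`, so conditioning on
`k` opens `w`. The sink `k` cannot occur as a non-collider, so nothing is blocked by `{k}`.
-/

namespace List

variable {α : Type*}

theorem triple_infix_append_cons {a v b w : α} {l₁ l₂ : List α}
    (h : [a, v, b] <:+: l₁ ++ w :: l₂) :
    [a, v, b] <:+: l₁ ++ [w] ∨ [a, v, b] <:+: w :: l₂ ∨ (v = w ∧ ∃ s, l₁ = s ++ [a]) := by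
  induction l₁ with
  | nil => exact Or.inr (Or.inl h)
  | cons c l ih =>
    rcases infix_cons_iff.mp h with hpre | hinf
    · obtain ⟨rfl, hvb⟩ := cons_prefix_cons.mp hpre
      rcases l with _ | ⟨d, _ | ⟨e, l⟩⟩
      · obtain ⟨rfl, -⟩ := cons_prefix_cons.mp hvb
        exact Or.inr (Or.inr ⟨rfl, [], rfl⟩)
      · obtain ⟨rfl, hb⟩ := cons_prefix_cons.mp hvb
        obtain ⟨rfl, -⟩ := cons_prefix_cons.mp hb
        exact Or.inl (infix_refl _)
      · obtain ⟨rfl, hb⟩ := cons_prefix_cons.mp hvb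
        obtain ⟨rfl, -⟩ := cons_prefix_cons.mp hb
        exact Or.inl ⟨[], l ++ [w], rfl⟩
    · rcases ih hinf with h₁ | h₂ | ⟨rfl, s, rfl⟩
      · exact Or.inl (h₁.trans (infix_cons (infix_refl _)))
      · exact Or.inr (Or.inl h₂)
      · exact Or.inr (Or.inr ⟨rfl, c :: s, rfl⟩)

theorem exists_eq_append_cons_first_mem [DecidableEq α] {p q : List α} {x : α} (hxp : x ∈ p)
    (hxq : x ∈ q) : ∃ p₁ w p₂, p = p₁ ++ w :: p₂ ∧ w ∈ q ∧ ∀ u ∈ p₁, u ∉ q := by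
  obtain ⟨w, hw⟩ := Option.isSome_iff_exists.mp <|
    find?_isSome (p := fun u => decide (u ∈ q)).mpr ⟨x, hxp, by simpa using hxq⟩
  obtain ⟨hwq, p₁, p₂, rfl, hp₁⟩ := find?_eq_some_iff_append.mp hw
  exact ⟨p₁, w, p₂, rfl, by simpa using hwq, by simpa using hp₁⟩

end List

open List Relation

section

variable {V : Type*} {E : V → V → Prop}

theorem isChain_skelAdj_reverse {l : List V} :
    l.reverse.IsChain (SkelAdj E) ↔ l.IsChain (SkelAdj E) := by
  rw [isChain_reverse]
  exact ⟨fun h => h.imp fun _ _ => Or.symm, fun h => h.imp fun _ _ => Or.symm⟩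

def ColliderFree (E : V → V → Prop) (p : List V) : Prop :=
  ∀ a v b, [a, v, b] <:+: p → ¬(E a v ∧ E b v)

theorem not_blocked_empty_iff {p : List V} : ¬Blocked E ∅ p ↔ ColliderFree E p := by
  simp [Blocked, ColliderFree]

theorem ColliderFree.mono {p q : List V} (hq : ColliderFree E q) (hpq : p <:+: q) :
    ColliderFree E p :=
  fun a v b h => hq a v b (h.trans hpq)

theorem ColliderFree.reverse {p : List V} (hp : ColliderFree E p) :
    ColliderFree E p.reverse := by
  intro a v b h hc
  exact hp b v a (reverse_infix.mp (by simpa using h)) hc.symm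

theorem isChain_of_colliderFree {a w : V} {t : List V}
    (hp : (a :: w :: t).IsChain (SkelAdj E)) (hcf : ColliderFree E (a :: w :: t))
    (haw : E a w) : (a :: w :: t).IsChain E := by
  induction t generalizing a w with
  | nil => simpa using haw
  | cons c t ih =>
    have hwc : E w c :=
      (isChain_cons_cons.mp (isChain_cons_cons.mp hp).2).1.resolve_right
        fun hcw => hcf a w c ⟨[], t, rfl⟩ ⟨haw, hcw⟩
    exact isChain_cons_cons.mpr
      ⟨haw, ih (isChain_cons_cons.mp hp).2 (hcf.mono (suffix_cons _ _).isInfix) hwc⟩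

theorem reflTransGen_of_colliderFree {a w k : V} {t : List V}
    (hp : (a :: w :: t).IsChain (SkelAdj E)) (hcf : ColliderFree E (a :: w :: t))
    (haw : E a w) (hk : (a :: w :: t).getLast? = some k) : ReflTransGen E w k :=
  relationReflTransGen_of_exists_isChain_cons t
    (isChain_cons_cons.mp (isChain_of_colliderFree hp hcf haw)).2
    (by simpa [getLast?_eq_some_getLast] using hk)

theorem not_blocked_singleton_of_sink {k : V} {r : List V} (hk : ∀ u, ¬E k u)
    (hr : r.IsChain (SkelAdj E))
    (hcol : ∀ a v b, [a, v, b] <:+: r → E a v → E b v → ReflTransGen E v k) :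
    ¬Blocked E {k} r := by
  rintro ⟨a, v, b, hinf, ⟨hav, hbv, hdesc⟩ | ⟨hnc, rfl⟩⟩
  · exact hdesc k (hcol a v b hinf hav hbv) rfl
  · have hadj := hr.infix hinf
    simp only [isChain_cons_cons, isChain_singleton, SkelAdj, and_true] at hadj
    exact hnc ⟨hadj.1.resolve_right (hk a), hadj.2.resolve_left (hk b)⟩

theorem dconn_singleton_of_dconn_empty_of_sink {x y k : V} (hk : ∀ u, ¬E k u)
    (hx : DConn E ∅ x k) (hy : DConn E ∅ y k) : DConn E {k} x y := by
  classical
  obtain ⟨p, hp, hpnd, hpx, hpk, hpb⟩ := hx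
  obtain ⟨q, hq, hqnd, hqy, hqk, hqb⟩ := hy
  rw [not_blocked_empty_iff] at hpb hqb
  obtain ⟨p₁, w, p₂, rfl, hwq, hp₁⟩ :=
    exists_eq_append_cons_first_mem (mem_of_getLast? hpk) (mem_of_getLast? hqk)
  obtain ⟨q₁, q₂, rfl⟩ := append_of_mem hwq
  have hp₁w : p₁ ++ [w] <:+: p₁ ++ w :: p₂ := ⟨[], p₂, by simp⟩
  have hq₁w : q₁ ++ [w] <:+: q₁ ++ w :: q₂ := ⟨[], q₂, by simp⟩
  have hchain : (p₁ ++ w :: q₁.reverse).IsChain (SkelAdj E) := by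
    have hwq₁ : ([w] ++ q₁.reverse).IsChain (SkelAdj E) := by
      simpa using isChain_skelAdj_reverse.mpr (hq.infix hq₁w)
    simpa using (hp.infix hp₁w).append_overlap hwq₁ (cons_ne_nil _ _)
  refine ⟨p₁ ++ w :: q₁.reverse, hchain, ?_, by simpa using hpx, ?_, ?_⟩
  · simp only [nodup_append, nodup_cons, nodup_reverse, mem_append, mem_cons, mem_reverse]
      at hpnd hqnd hp₁ ⊢
    grind
  · rw [getLast?_append_of_ne_nil _ (cons_ne_nil _ _), ← reverse_concat, getLast?_reverse]
    simpa [head?_append] using hqy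
  refine not_blocked_singleton_of_sink hk hchain fun a v b hinf hav hbv => ?_
  rcases triple_infix_append_cons hinf with hp' | hq' | ⟨rfl, s, rfl⟩
  · exact absurd ⟨hav, hbv⟩ (hpb a v b (hp'.trans hp₁w))
  · refine absurd ⟨hav, hbv⟩ ((hqb.mono hq₁w).reverse a v b ?_)
    simpa using hq'
  · have hsuf : a :: v :: p₂ <:+: s ++ [a] ++ v :: p₂ := ⟨s, [], by simp⟩
    exact reflTransGen_of_colliderFree (hp.infix hsuf) (hpb.mono hsuf) hav (by simpa using hpk)

end

theorem dconn_given_collider_general {V : Type*} (G : MCM V) (Mi Mj Mk : V)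
    (hk : Mk ∈ G.M)
    (hik' : DConn G.E ∅ Mi Mk) (hjk' : DConn G.E ∅ Mj Mk) :
    DConn G.E {Mk} Mi Mj :=
  dconn_singleton_of_dconn_empty_of_sink (G.meas_sink Mk hk) hik' hjk'

/-- In a MeDIL causal model, if `Mi ⊥ Mj` given `∅` but both `Mi` and `Mj` are
d-connected to `Mk` given `∅`, then `Mi` and `Mj` are d-connected given `{Mk}`. -/
theorem dconn_given_collider {V : Type*} (G : MCM V) (Mi Mj Mk : V)
    (hi : Mi ∈ G.M) (hj : Mj ∈ G.M) (hk : Mk ∈ G.M)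
    (hij : Mi ≠ Mj) (hik : Mi ≠ Mk) (hjk : Mj ≠ Mk)
    (hsep : ¬ DConn G.E ∅ Mi Mj)
    (hik' : DConn G.E ∅ Mi Mk) (hjk' : DConn G.E ∅ Mj Mk) :
    DConn G.E {Mk} Mi Mj :=
  dconn_given_collider_general G Mi Mj Mk hk hik' hjk'
end

section
/- Given a finite simple graph D on vertex set M (the undirected dependency graph) and an edge clique cover 𝒞 of D, construct the bipartite DAG G with vertex set {v_C : C ∈ 𝒞} ∪ M and a directed edge v_C → m iff m ∈ C. Then (assuming D has no isolated vertices and every clique in 𝒞 is nonempty with size ≥ 1) G is a MeDIL causal model, and two measurement vertices m, m' are d-connected in G given ∅ if and only if {m, m'} is an edge of D. -/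
/-- The edge relation of the two-layer DAG built from an edge clique cover `𝒞`
of a graph on `V`: a latent vertex `v_C` for each clique `C ∈ 𝒞`, with a
directed edge `v_C → m` iff `m ∈ C`. -/
def eccEdge {V : Type*} (𝒞 : Finset (Finset V)) :
    ({C // C ∈ 𝒞} ⊕ V) → ({C // C ∈ 𝒞} ⊕ V) → Prop
  | Sum.inl C, Sum.inr m => m ∈ C.1
  | _, _ => False

theorem Relation.not_transGen_self_of_forall_not_two_step {α : Type*} {r : α → α → Prop}
    (h : ∀ a b c, r a b → ¬ r b c) (a : α) : ¬ Relation.TransGen r a a := by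
  intro hcyc
  obtain ⟨b, hab, hba⟩ := Relation.TransGen.head'_iff.1 hcyc
  cases hba.cases_tail with
  | inl hba => exact h a a a (hba ▸ hab) (hba ▸ hab)
  | inr hba =>
    obtain ⟨c, -, hca⟩ := hba
    exact h c a b hca hab

theorem blocked_empty_iff {α : Type*} {E : α → α → Prop} {p : List α} :
    Blocked E ∅ p ↔ ∃ a v b, [a, v, b] <:+: p ∧ E a v ∧ E b v := by
  simp [Blocked]

section eccEdge

variable {V : Type*} {𝒞 : Finset (Finset V)}

theorem not_eccEdge_inr (m : V) (x : {C // C ∈ 𝒞} ⊕ V) : ¬ eccEdge 𝒞 (Sum.inr m) x := by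
  cases x <;> exact id

theorem not_eccEdge_inl (x : {C // C ∈ 𝒞} ⊕ V) (C : {C // C ∈ 𝒞}) : ¬ eccEdge 𝒞 x (Sum.inl C) := by
  cases x <;> exact id

theorem not_eccEdge_of_eccEdge {x y z : {C // C ∈ 𝒞} ⊕ V} (hxy : eccEdge 𝒞 x y) :
    ¬ eccEdge 𝒞 y z := by
  cases y with
  | inl C => exact absurd hxy (not_eccEdge_inl x C)
  | inr m => exact not_eccEdge_inr m z

theorem skelAdj_eccEdge_inr_iff {m : V} {x : {C // C ∈ 𝒞} ⊕ V} :
    SkelAdj (eccEdge 𝒞) (Sum.inr m) x ↔ ∃ C : {C // C ∈ 𝒞}, x = Sum.inl C ∧ m ∈ C.1 := by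
  cases x <;> simp [SkelAdj, eccEdge]

theorem skelAdj_eccEdge_inl_iff {C : {C // C ∈ 𝒞}} {x : {C // C ∈ 𝒞} ⊕ V} :
    SkelAdj (eccEdge 𝒞) (Sum.inl C) x ↔ ∃ m, x = Sum.inr m ∧ m ∈ C.1 := by
  cases x <;> simp [SkelAdj, eccEdge]

variable (𝒞) in
def eccMCM (hnonempty : ∀ C ∈ 𝒞, C.Nonempty) (hnoiso : ∀ v : V, ∃ C ∈ 𝒞, v ∈ C) :
    MCM ({C // C ∈ 𝒞} ⊕ V) where
  E := eccEdge 𝒞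
  L := Set.range Sum.inl
  M := Set.range Sum.inr
  disjoint := Set.disjoint_left.2 <| by rintro _ ⟨C, rfl⟩ ⟨m, ⟨⟩⟩
  union := by ext x; cases x <;> simp
  acyclic := Relation.not_transGen_self_of_forall_not_two_step fun _ _ _ => not_eccEdge_of_eccEdge
  meas_sink := by rintro _ ⟨m, rfl⟩; exact not_eccEdge_inr m
  meas_indeg := by
    rintro _ ⟨m, rfl⟩
    obtain ⟨C, hC, hm⟩ := hnoiso m
    exact ⟨Sum.inl ⟨C, hC⟩, hm⟩
  lat_outdeg := by
    rintro _ ⟨C, rfl⟩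
    obtain ⟨m, hm⟩ := hnonempty C.1 C.2
    exact ⟨Sum.inr m, hm⟩

theorem dConn_eccEdge_of_mem {m m' : V} (hne : m ≠ m') {C : Finset V} (hC : C ∈ 𝒞)
    (hm : m ∈ C) (hm' : m' ∈ C) : DConn (eccEdge 𝒞) ∅ (Sum.inr m) (Sum.inr m') := by
  refine ⟨[Sum.inr m, Sum.inl ⟨C, hC⟩, Sum.inr m'], ?_, by simp [hne], rfl, rfl, ?_⟩
  · exact List.isChain_cons_cons.2 ⟨Or.inr hm, List.isChain_pair.2 (Or.inl hm')⟩
  · rw [blocked_empty_iff]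
    rintro ⟨a, v, b, hinf, hav, -⟩
    obtain ⟨rfl, rfl, rfl⟩ : a = Sum.inr m ∧ v = Sum.inl ⟨C, hC⟩ ∧ b = Sum.inr m' := by
      simpa using hinf.eq_of_length rfl
    exact not_eccEdge_inr m _ hav

theorem exists_mem_of_dConn_eccEdge {m m' : V} (hne : m ≠ m')
    (h : DConn (eccEdge 𝒞) ∅ (Sum.inr m) (Sum.inr m')) : ∃ C ∈ 𝒞, m ∈ C ∧ m' ∈ C := by
  obtain ⟨p, hchain, -, hhead, hlast, hnb⟩ := h
  rw [blocked_empty_iff] at hnb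
  obtain ⟨t, rfl⟩ : ∃ t, p = Sum.inr m :: t := by
    cases p <;> simp_all
  change List.IsChain _ _ at hchain
  rcases t with _ | ⟨x, t⟩
  · exact absurd (by simpa using hlast) hne
  rw [List.isChain_cons_cons, skelAdj_eccEdge_inr_iff] at hchain
  obtain ⟨⟨C, rfl, hm⟩, hchain⟩ := hchain
  rcases t with _ | ⟨y, t⟩
  · simp at hlast
  rw [List.isChain_cons_cons, skelAdj_eccEdge_inl_iff] at hchain
  obtain ⟨⟨b, rfl, hb⟩, hchain⟩ := hchain
  rcases t with _ | ⟨z, t⟩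
  · obtain rfl : b = m' := by simpa using hlast
    exact ⟨C.1, C.2, hm, hb⟩
  rw [List.isChain_cons_cons, skelAdj_eccEdge_inr_iff] at hchain
  obtain ⟨⟨C', rfl, hb'⟩, -⟩ := hchain
  exact absurd ⟨_, _, _, ⟨[Sum.inr m], t, rfl⟩, hb, hb'⟩ hnb

theorem dConn_eccEdge_iff {m m' : V} (hne : m ≠ m') :
    DConn (eccEdge 𝒞) ∅ (Sum.inr m) (Sum.inr m') ↔ ∃ C ∈ 𝒞, m ∈ C ∧ m' ∈ C :=
  ⟨exists_mem_of_dConn_eccEdge hne, fun ⟨_, hC, hm, hm'⟩ => dConn_eccEdge_of_mem hne hC hm hm'⟩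

end eccEdge

theorem ecc_mcm_dconn_general {V : Type*}
    (D : SimpleGraph V) (𝒞 : Finset (Finset V))
    (hclique : ∀ C ∈ 𝒞, D.IsClique (C : Set V))
    (hcover : ∀ u v : V, D.Adj u v → ∃ C ∈ 𝒞, u ∈ C ∧ v ∈ C)
    (hnonempty : ∀ C ∈ 𝒞, C.Nonempty)
    (hnoiso : ∀ v : V, ∃ C ∈ 𝒞, v ∈ C) :
    (∃ G : MCM ({C // C ∈ 𝒞} ⊕ V), G.E = eccEdge 𝒞 ∧
      G.L = Set.range Sum.inl ∧ G.M = Set.range Sum.inr) ∧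
    ∀ m m' : V, m ≠ m' →
      (DConn (eccEdge 𝒞) ∅ (Sum.inr m) (Sum.inr m') ↔ D.Adj m m') := by
  refine ⟨⟨eccMCM 𝒞 hnonempty hnoiso, rfl, rfl, rfl⟩, fun m m' hne => ?_⟩
  rw [dConn_eccEdge_iff hne]
  exact ⟨fun ⟨C, hC, hm, hm'⟩ => hclique C hC hm hm' hne, hcover m m'⟩

/-- Given an edge clique cover `𝒞` of the undirected dependency graph `D`
(with `D` having no isolated vertices and every clique of `𝒞` nonempty), the
two-layer DAG built from `𝒞` is a MeDIL causal model, and two measurement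
vertices are d-connected given `∅` in it iff they are adjacent in `D`. -/
theorem ecc_mcm_dconn {V : Type*} [Fintype V] [DecidableEq V]
    (D : SimpleGraph V) (𝒞 : Finset (Finset V))
    (hclique : ∀ C ∈ 𝒞, D.IsClique (C : Set V))
    (hcover : ∀ u v : V, D.Adj u v → ∃ C ∈ 𝒞, u ∈ C ∧ v ∈ C)
    (hnonempty : ∀ C ∈ 𝒞, C.Nonempty)
    (hnoiso : ∀ v : V, ∃ C ∈ 𝒞, v ∈ C) :
    (∃ G : MCM ({C // C ∈ 𝒞} ⊕ V), G.E = eccEdge 𝒞 ∧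
      G.L = Set.range Sum.inl ∧ G.M = Set.range Sum.inr) ∧
    ∀ m m' : V, m ≠ m' →
      (DConn (eccEdge 𝒞) ∅ (Sum.inr m) (Sum.inr m') ↔ D.Adj m m') :=
  ecc_mcm_dconn_general D 𝒞 hclique hcover hnonempty hnoiso
end

section
/- A finite simple graph on n vertices has at most 3^{n/3} maximal cliques. -/
/-!
Strong induction on the number of vertices `n`, in the form `N(G) ^ 3 ≤ 3 ^ n` so as to stay
in `ℕ`. Let `v` be a vertex of maximum degree `d`. Every maximal clique contains a vertex `u` not
adjacent to `v` (possibly `v` itself), since otherwise `v` could be added to it; and a maximal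
clique through `u` is determined by its trace on the neighbourhood of `u`, which is a maximal
clique of the graph induced there, on at most `d` vertices. Hence `N(G) ≤ (n - d) · 3 ^ (d / 3)`,
and `n - d ≤ 3 ^ ((n - d) / 3)` because `k ^ 3 ≤ 3 ^ k`.
-/

/-- `C` is a maximal clique of `G`. -/
def IsMaximalClique {V : Type*} (G : SimpleGraph V) (C : Finset V) : Prop :=
  G.IsClique (C : Set V) ∧ ∀ D : Finset V, G.IsClique (D : Set V) → C ⊆ D → C = D

open Finset

theorem pow_three_le_three_pow (k : ℕ) : k ^ 3 ≤ 3 ^ k := by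
  rcases lt_or_ge k 3 with hk | hk
  · interval_cases k <;> norm_num
  induction k, hk using Nat.le_induction with
  | base => norm_num
  | succ m hm ih =>
    calc (m + 1) ^ 3 ≤ 3 * m ^ 3 := by
          nlinarith [Nat.mul_le_mul_left (m * m) hm, Nat.mul_le_mul_left m hm]
      _ ≤ 3 * 3 ^ m := Nat.mul_le_mul_left 3 ih
      _ = 3 ^ (m + 1) := (pow_succ' 3 m).symm

namespace IsMaximalClique

variable {V : Type*} {G : SimpleGraph V} {C : Finset V} {u : V}

theorem exists_mem_not_adj (hC : IsMaximalClique G C) (v : V) : ∃ u ∈ C, ¬ G.Adj v u := by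
  classical
  by_contra! hadj
  have hvC : v ∉ C := fun hv => G.irrefl (hadj v hv)
  have hclique : G.IsClique (insert v C : Finset V) := by
    rw [coe_insert]
    exact hC.1.insert fun w hw _ => hadj w hw
  exact hvC (hC.2 _ hclique (subset_insert v C) ▸ mem_insert_self v C)

theorem induce_neighborSet (hC : IsMaximalClique G C) (hu : u ∈ C) :
    IsMaximalClique (G.induce (G.neighborSet u))
      (C.preimage (↑) Subtype.val_injective.injOn) := by
  classical
  refine ⟨fun x hx y hy hxy => hC.1 (mem_preimage.1 hx) (mem_preimage.1 hy)
    (by simpa [Subtype.ext_iff] using hxy), ?_⟩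
  intro D hD hCD
  set D' : Finset V := insert u (D.map (Function.Embedding.subtype _))
  have hD' : G.IsClique (D' : Set V) := by
    rw [coe_insert, coe_map]
    refine ((hD.map (f := .subtype _)).mono (G.map_comap_le _)).insert ?_
    rintro _ ⟨w, -, rfl⟩ -
    exact w.2
  have hCD' : C ⊆ D' := by
    intro x hx
    rcases eq_or_ne u x with rfl | hne
    · exact mem_insert_self _ _
    · exact mem_insert_of_mem
        (mem_map_of_mem _ (hCD (x := ⟨x, hC.1 hu hx hne⟩) (mem_preimage.2 hx)))
  refine hCD.antisymm fun x hx => mem_preimage.2 ?_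
  rw [hC.2 D' hD' hCD']
  exact mem_insert_of_mem (mem_map_of_mem _ hx)

end IsMaximalClique

section

variable {V : Type*} {G : SimpleGraph V}

theorem SimpleGraph.IsClique.subset_of_preimage_neighborSet_subset {u : V} {C C' : Finset V}
    (hC : G.IsClique (C : Set V)) (hu : u ∈ C) (hu' : u ∈ C')
    (h : C.preimage ((↑) : G.neighborSet u → V) Subtype.val_injective.injOn ⊆
      C'.preimage (↑) Subtype.val_injective.injOn) :
    C ⊆ C' := by
  intro x hx
  rcases eq_or_ne u x with rfl | hne
  · exact hu'
  · exact mem_preimage.1 (h (x := ⟨x, hC hu hx hne⟩) (mem_preimage.2 hx))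

theorem card_maximalCliques_containing_le [Finite V] (u : V) :
    Nat.card {C // IsMaximalClique G C ∧ u ∈ C} ≤
      Nat.card {D // IsMaximalClique (G.induce (G.neighborSet u)) D} := by
  refine Nat.card_le_card_of_injective (fun C => ⟨_, C.2.1.induce_neighborSet C.2.2⟩) ?_
  rintro ⟨C, hC, hu⟩ ⟨C', hC', hu'⟩ h
  simp only [Subtype.mk.injEq] at h ⊢
  exact (hC.1.subset_of_preimage_neighborSet_subset hu hu' h.le).antisymm
    (hC'.1.subset_of_preimage_neighborSet_subset hu' hu h.ge)

theorem card_maximalCliques_le_card_mul [Fintype V] [DecidableRel G.Adj] (v : V) {b : ℕ}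
    (hb : ∀ u, ¬ G.Adj v u →
      Nat.card {D // IsMaximalClique (G.induce (G.neighborSet u)) D} ≤ b) :
    Nat.card {C // IsMaximalClique G C} ≤ #{u | ¬ G.Adj v u} * b := by
  classical
  let cliquesThrough (u : V) : Finset (Finset V) := {C | IsMaximalClique G C ∧ u ∈ C}
  calc Nat.card {C // IsMaximalClique G C}
      = #{C | IsMaximalClique G C} := by rw [Nat.card_eq_fintype_card, Fintype.card_subtype]
    _ ≤ #(({u | ¬ G.Adj v u} : Finset V).biUnion cliquesThrough) := by
      refine card_le_card fun C hC => ?_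
      obtain ⟨u, hu, hvu⟩ := (mem_filter.1 hC).2.exists_mem_not_adj v
      exact mem_biUnion.2
        ⟨u, by simpa using hvu, by simp [cliquesThrough, (mem_filter.1 hC).2, hu]⟩
    _ ≤ #{u | ¬ G.Adj v u} * b := by
      refine card_biUnion_le_card_mul _ _ _ fun u hu => ?_
      rw [← Fintype.card_subtype, ← Nat.card_eq_fintype_card]
      exact (card_maximalCliques_containing_le u).trans (hb u (mem_filter.1 hu).2)

end

theorem card_maximalCliques_pow_three_le {V : Type*} [Fintype V] (G : SimpleGraph V) :
    Nat.card {C // IsMaximalClique G C} ^ 3 ≤ 3 ^ Fintype.card V := by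
  classical
  induction h : Fintype.card V using Nat.strong_induction_on generalizing V with
  | _ n ih =>
  rcases isEmpty_or_nonempty V with hV | hV
  · have : Nat.card {C // IsMaximalClique G C} ≤ 1 :=
      Finite.card_le_one_iff_subsingleton.2 inferInstance
    calc _ ≤ 1 := pow_le_one' this 3
      _ ≤ 3 ^ n := Nat.one_le_pow _ _ three_pos
  obtain ⟨v, -, hv⟩ := exists_max_image univ (fun w => G.degree w) univ_nonempty
  obtain ⟨u, -, hmax⟩ := exists_max_image {u | ¬ G.Adj v u}
    (fun u => Nat.card {D // IsMaximalClique (G.induce (G.neighborSet u)) D}) ⟨v, by simp⟩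
  have hcount := card_maximalCliques_le_card_mul v fun w hw => hmax w (by simpa using hw)
  have hsplit : #{w | ¬ G.Adj v w} + G.degree v = n := by
    rw [← h, ← G.card_neighborFinset_eq_degree, add_comm, G.neighborFinset_eq_filter,
      card_filter_add_card_filter_not, card_univ]
  have hdeg : Fintype.card (G.neighborSet u) < n :=
    h ▸ Fintype.card_subtype_lt (G.irrefl (v := u))
  have hu_bound : Nat.card {D // IsMaximalClique (G.induce (G.neighborSet u)) D} ^ 3 ≤
      3 ^ G.degree v := by
    refine (ih _ hdeg _ rfl).trans (Nat.pow_le_pow_right three_pos ?_)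
    exact (G.card_neighborSet_eq_degree u).trans_le (hv u (mem_univ u))
  calc Nat.card {C // IsMaximalClique G C} ^ 3
      ≤ (#{w | ¬ G.Adj v w} * _) ^ 3 := Nat.pow_le_pow_left hcount 3
    _ = #{w | ¬ G.Adj v w} ^ 3 * _ := mul_pow _ _ 3
    _ ≤ 3 ^ #{w | ¬ G.Adj v w} * 3 ^ G.degree v :=
      Nat.mul_le_mul (pow_three_le_three_pow _) hu_bound
    _ = 3 ^ n := by rw [← pow_add, hsplit]

theorem card_maximalCliques_le_general {V : Type*} [Fintype V]
    (G : SimpleGraph V) :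
    (Nat.card {C : Finset V // IsMaximalClique G C} : ℝ) ≤
      (3 : ℝ) ^ ((Fintype.card V : ℝ) / 3) := by
  have hcube : ((3 : ℝ) ^ ((Fintype.card V : ℝ) / 3)) ^ 3 = 3 ^ Fintype.card V := by
    rw [← Real.rpow_mul_natCast zero_le_three, Nat.cast_ofNat, div_mul_cancel₀ _ three_ne_zero,
      Real.rpow_natCast]
  refine le_of_pow_le_pow_left₀ three_ne_zero (by positivity) ?_
  rw [hcube]
  exact_mod_cast card_maximalCliques_pow_three_le G

/-- Moon–Moser: a graph on `n` vertices has at most `3 ^ (n/3)` maximal cliques. -/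
theorem card_maximalCliques_le {V : Type*} [Fintype V] [DecidableEq V]
    (G : SimpleGraph V) :
    (Nat.card {C : Finset V // IsMaximalClique G C} : ℝ) ≤
      (3 : ℝ) ^ ((Fintype.card V : ℝ) / 3) :=
  card_maximalCliques_le_general G
end
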